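/- arXiv:2209.03588 — 3 statements merged into one kernel-verified Lean document; each statement's English description precedes it below -/
import Mathlib

section
/- Quantile shift under linear reward component: let B: [0,1] → ℝ be bounded and non-increasing, and let q_ν(r) = x_nom + σ√T · N⁻¹( (∫₀^r exp(−B(z)/(2cσ²)) dz) / (∫₀^1 exp(−B(z)/(2cσ²)) dz) ) be the equilibrium quantile function for the purely rank-based reward B. Then q_μ(r) := q_ν(r) − pT/(2c) satisfies the equilibrium characterization for the reward R(x,r) = B(r) − px, namely N((q_μ(r) − x_nom)/(σ√T)) = (∫₀^r exp(−(B(z) − p·q_μ(z))/(2cσ²)) dz) / (∫₀^1 exp(−(B(z) − p·q_μ(z))/(2cσ²)) dz) for all r ∈ (0,1). -/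
noncomputable def stdNormalCDF (x : ℝ) : ℝ :=
  ∫ t in Set.Iic x, (1 / Real.sqrt (2 * Real.pi)) * Real.exp (-t^2 / 2)

noncomputable def stdNormalQuantile : ℝ → ℝ := Function.invFun stdNormalCDF

open MeasureTheory Set Filter Real

noncomputable def phiSN (t : ℝ) : ℝ := (1 / Real.sqrt (2 * Real.pi)) * Real.exp (-t^2 / 2)

lemma phiSN_pos (t : ℝ) : 0 < phiSN t := by
  have h : 0 < Real.sqrt (2 * Real.pi) := Real.sqrt_pos.2 (by positivity)
  exact mul_pos (by positivity) (Real.exp_pos _)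

lemma continuous_phiSN : Continuous phiSN := by
  unfold phiSN; continuity

lemma integrable_phiSN : Integrable phiSN := by
  have h := (integrable_exp_neg_mul_sq (by norm_num : (0:ℝ) < 1/2)).const_mul
      (1 / Real.sqrt (2 * Real.pi))
  refine h.congr (Filter.Eventually.of_forall fun x => ?_)
  unfold phiSN; ring_nf

lemma integral_phiSN : ∫ t, phiSN t = 1 := by
  have h : ∫ t, phiSN t = (1 / Real.sqrt (2 * Real.pi)) * ∫ t : ℝ, Real.exp (-(1/2) * t^2) := by
    rw [← MeasureTheory.integral_const_mul]
    congr 1; funext t; unfold phiSN; ring_nf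
  rw [h, integral_gaussian]
  have h2 : Real.pi / (1/2) = 2 * Real.pi := by ring
  rw [h2]
  have h3 : Real.sqrt (2 * Real.pi) ≠ 0 := ne_of_gt (Real.sqrt_pos.2 (by positivity))
  field_simp

lemma stdNormalCDF_eq (x : ℝ) : stdNormalCDF x = ∫ t in Iic x, phiSN t := rfl

lemma cdf_sub_cdf (x y : ℝ) :
    stdNormalCDF y - stdNormalCDF x = ∫ t in x..y, phiSN t := by
  rw [stdNormalCDF_eq, stdNormalCDF_eq]
  exact intervalIntegral.integral_Iic_sub_Iic integrable_phiSN.integrableOn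
    integrable_phiSN.integrableOn

lemma strictMono_cdf : StrictMono stdNormalCDF := by
  intro x y hxy
  have h : 0 < ∫ t in x..y, phiSN t :=
    intervalIntegral.intervalIntegral_pos_of_pos
      (continuous_phiSN.intervalIntegrable x y) phiSN_pos hxy
  have := cdf_sub_cdf x y
  linarith

lemma continuous_cdf : Continuous stdNormalCDF := by
  have C0 : (0:ℝ) < 1 / Real.sqrt (2 * Real.pi) := by
    have : 0 < Real.sqrt (2 * Real.pi) := Real.sqrt_pos.2 (by positivity)
    positivity
  refine (LipschitzWith.of_dist_le_mul (K := ⟨_, C0.le⟩) fun x y => ?_).continuous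
  have hb : ∀ t ∈ Set.uIoc y x, ‖phiSN t‖ ≤ 1 / Real.sqrt (2 * Real.pi) := by
    intro t _
    rw [Real.norm_eq_abs, abs_of_pos (phiSN_pos t)]
    unfold phiSN
    have : Real.exp (-t^2/2) ≤ 1 := by
      rw [Real.exp_le_one_iff]; nlinarith [sq_nonneg t]
    nlinarith
  have := intervalIntegral.norm_integral_le_of_norm_le_const (a := y) (b := x)
    (C := 1 / Real.sqrt (2 * Real.pi)) hb
  rw [Real.dist_eq, Real.dist_eq, cdf_sub_cdf y x] at *
  calc |(∫ t in y..x, phiSN t)| ≤ 1 / Real.sqrt (2 * Real.pi) * |x - y| := this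
    _ = _ := by norm_num; exact Or.inl rfl
lemma cdf_pos (x : ℝ) : 0 < stdNormalCDF x := by
  rw [stdNormalCDF_eq]
  rw [MeasureTheory.setIntegral_pos_iff_support_of_nonneg_ae
    (Filter.Eventually.of_forall fun t => (phiSN_pos t).le) integrable_phiSN.integrableOn]
  have : Function.support phiSN = Set.univ := by
    ext t; simp [Function.mem_support, (phiSN_pos t).ne']
  rw [this, Set.univ_inter, Real.volume_Iic]
  simp

lemma cdf_lt_one (x : ℝ) : stdNormalCDF x < 1 := by
  have hsplit : stdNormalCDF x + ∫ t in Set.Ioi x, phiSN t = 1 := by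
    rw [stdNormalCDF_eq, intervalIntegral.integral_Iic_add_Ioi integrable_phiSN.integrableOn
      integrable_phiSN.integrableOn, ← integral_phiSN]
  have hpos : 0 < ∫ t in Set.Ioi x, phiSN t := by
    rw [MeasureTheory.setIntegral_pos_iff_support_of_nonneg_ae
      (Filter.Eventually.of_forall fun t => (phiSN_pos t).le) integrable_phiSN.integrableOn]
    have : Function.support phiSN = Set.univ := by
      ext t; simp [Function.mem_support, (phiSN_pos t).ne']
    rw [this, Set.univ_inter, Real.volume_Ioi]
    simp
  linarith

lemma tendsto_cdf_atTop : Tendsto stdNormalCDF atTop (nhds 1) := by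
  have h := MeasureTheory.tendsto_setIntegral_of_monotone (μ := volume)
    (s := fun b : ℝ => Iic b) (f := phiSN)
    (fun i => measurableSet_Iic) (fun a b hab => Iic_subset_Iic.2 hab)
    (by rw [Set.iUnion_Iic]; exact integrable_phiSN.integrableOn)
  rw [Set.iUnion_Iic] at h
  simp [integral_phiSN] at h; exact h

lemma tendsto_cdf_atBot : Tendsto stdNormalCDF atBot (nhds 0) := by
  have h := MeasureTheory.tendsto_setIntegral_of_antitone (μ := volume)
    (s := fun b : ℝ => Iic (-b)) (f := phiSN)
    (fun i => measurableSet_Iic) (fun a b hab => Iic_subset_Iic.2 (by linarith))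
    ⟨0, integrable_phiSN.integrableOn⟩
  have hempty : (⋂ b : ℝ, Iic (-b)) = ∅ := by
    ext x
    simp only [Set.mem_iInter, Set.mem_Iic, Set.mem_empty_iff_false, iff_false, not_forall]
    exact ⟨-(x - 1), by push_neg; linarith⟩
  rw [hempty] at h
  simp only [MeasureTheory.Measure.restrict_empty, MeasureTheory.integral_zero_measure] at h
  have h2 : Tendsto (fun b : ℝ => stdNormalCDF (-b)) atTop (nhds 0) := by
    simpa [stdNormalCDF_eq] using h
  have h3 := h2.comp (tendsto_neg_atBot_atTop : Tendsto (fun x : ℝ => -x) atBot atTop)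
  have h4 : stdNormalCDF = (fun b : ℝ => stdNormalCDF (-b)) ∘ Neg.neg := by
    funext z; simp
  rw [h4]; exact h3

lemma exists_cdf_eq {u : ℝ} (hu : u ∈ Set.Ioo (0:ℝ) 1) : ∃ x, stdNormalCDF x = u := by
  obtain ⟨x₀, hx₀⟩ : ∃ x₀, stdNormalCDF x₀ < u :=
    (tendsto_cdf_atBot.eventually_lt_const hu.1).exists
  obtain ⟨x₁, hx₁⟩ : ∃ x₁, u < stdNormalCDF x₁ :=
    (tendsto_cdf_atTop.eventually_const_lt hu.2).exists
  have := intermediate_value_univ x₀ x₁ continuous_cdf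
  exact this ⟨hx₀.le, hx₁.le⟩

lemma cdf_quantile {u : ℝ} (hu : u ∈ Set.Ioo (0:ℝ) 1) :
    stdNormalCDF (stdNormalQuantile u) = u :=
  Function.invFun_eq (exists_cdf_eq hu)

lemma quantile_cdf (x : ℝ) : stdNormalQuantile (stdNormalCDF x) = x :=
  Function.leftInverse_invFun strictMono_cdf.injective x

lemma continuousOn_quantile : ContinuousOn stdNormalQuantile (Set.Ioo 0 1) := by
  intro t ht
  refine ContinuousAt.continuousWithinAt ?_
  rw [Metric.continuousAt_iff]
  intro ε hε
  set x := stdNormalQuantile t with hx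
  have hΦx : stdNormalCDF x = t := cdf_quantile ht
  have h1 : stdNormalCDF (x - ε) < t := by
    rw [← hΦx]; exact strictMono_cdf (by linarith)
  have h2 : t < stdNormalCDF (x + ε) := by
    rw [← hΦx]; exact strictMono_cdf (by linarith)
  refine ⟨min (t - stdNormalCDF (x - ε)) (stdNormalCDF (x + ε) - t),
    lt_min (by linarith) (by linarith), ?_⟩
  intro s hs
  rw [Real.dist_eq] at hs
  obtain ⟨hl, hr⟩ := abs_lt.1 hs
  have hminA := min_le_left (t - stdNormalCDF (x - ε)) (stdNormalCDF (x + ε) - t)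
  have hminB := min_le_right (t - stdNormalCDF (x - ε)) (stdNormalCDF (x + ε) - t)
  have hs1 : stdNormalCDF (x - ε) < s := by linarith
  have hs2 : s < stdNormalCDF (x + ε) := by linarith
  have hsIoo : s ∈ Set.Ioo (0:ℝ) 1 :=
    ⟨(cdf_pos _).trans hs1, hs2.trans (cdf_lt_one _)⟩
  have hΦs : stdNormalCDF (stdNormalQuantile s) = s := cdf_quantile hsIoo
  have q1 : x - ε < stdNormalQuantile s := by
    by_contra hcon
    push_neg at hcon
    exact absurd (strictMono_cdf.le_iff_le.2 hcon) (by rw [hΦs]; linarith)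
  have q2 : stdNormalQuantile s < x + ε := by
    by_contra hcon
    push_neg at hcon
    exact absurd (strictMono_cdf.le_iff_le.2 hcon) (by rw [hΦs]; linarith)
  rw [Real.dist_eq, abs_lt]
  constructor <;> linarith
lemma hasDerivAt_cdf (x : ℝ) : HasDerivAt stdNormalCDF (phiSN x) x := by
  have h0 : stdNormalCDF = fun b => stdNormalCDF 0 + ∫ t in (0:ℝ)..b, phiSN t := by
    funext b
    have := cdf_sub_cdf 0 b
    linarith
  rw [h0]
  refine HasDerivAt.const_add _ ?_
  exact intervalIntegral.integral_hasDerivAt_right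
    (continuous_phiSN.intervalIntegrable 0 x)
    (continuous_phiSN.stronglyMeasurableAtFilter _ _)
    continuous_phiSN.continuousAt

lemma exp_mul_phiSN (a t : ℝ) :
    Real.exp (a * t) * phiSN t = Real.exp (a^2 / 2) * phiSN (t - a) := by
  unfold phiSN
  have h : Real.exp (a * t) * Real.exp (-t^2/2)
      = Real.exp (a^2/2) * Real.exp (-(t-a)^2/2) := by
    rw [← Real.exp_add, ← Real.exp_add]; congr 1; ring
  linear_combination (1 / Real.sqrt (2 * Real.pi)) * h

lemma integral_exp_mul_phiSN (a x y : ℝ) :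
    ∫ t in x..y, Real.exp (a * t) * phiSN t
      = Real.exp (a^2 / 2) * (stdNormalCDF (y - a) - stdNormalCDF (x - a)) := by
  have h1 : ∀ t, Real.exp (a * t) * phiSN t = Real.exp (a^2/2) * phiSN (t - a) :=
    exp_mul_phiSN a
  rw [intervalIntegral.integral_congr (g := fun t => Real.exp (a^2/2) * phiSN (t - a))
    (fun t _ => h1 t), intervalIntegral.integral_const_mul,
    intervalIntegral.integral_comp_sub_right (fun t => phiSN t) a, ← cdf_sub_cdf]

noncomputable def GFun (a : ℝ) (s : ℝ) : ℝ := Real.exp (a * stdNormalQuantile s)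

lemma GFun_pos (a s : ℝ) : 0 < GFun a s := Real.exp_pos _

lemma continuousOn_GFun (a : ℝ) : ContinuousOn (GFun a) (Set.Ioo 0 1) :=
  (Real.continuous_exp.comp_continuousOn (continuousOn_quantile.const_smul a))

lemma subG (a x y : ℝ) :
    ∫ s in (stdNormalCDF x)..(stdNormalCDF y), GFun a s
      = Real.exp (a^2 / 2) * (stdNormalCDF (y - a) - stdNormalCDF (x - a)) := by
  have key := intervalIntegral.integral_comp_smul_deriv' (a := x) (b := y)
    (f := stdNormalCDF) (f' := phiSN) (g := GFun a)
    (fun t _ => hasDerivAt_cdf t) continuous_phiSN.continuousOn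
    (by
      refine (continuousOn_GFun a).mono ?_
      rintro s ⟨t, _, rfl⟩
      exact ⟨cdf_pos t, cdf_lt_one t⟩)
  rw [← key, ← integral_exp_mul_phiSN a x y]
  refine intervalIntegral.integral_congr fun t _ => ?_
  simp only [Function.comp, smul_eq_mul, GFun, quantile_cdf]
  ring
lemma tendsto_cdf_neg_nat :
    Tendsto (fun n : ℕ => stdNormalCDF (-(n:ℝ))) atTop (nhds 0) :=
  tendsto_cdf_atBot.comp (tendsto_neg_atTop_atBot.comp tendsto_natCast_atTop_atTop)

lemma tendsto_cdf_nat :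
    Tendsto (fun n : ℕ => stdNormalCDF (n:ℝ)) atTop (nhds 1) :=
  tendsto_cdf_atTop.comp tendsto_natCast_atTop_atTop

lemma tendsto_cdf_neg_nat_sub (a : ℝ) :
    Tendsto (fun n : ℕ => stdNormalCDF (-(n:ℝ) - a)) atTop (nhds 0) :=
  tendsto_cdf_atBot.comp (tendsto_atBot_add_const_right _ (-a)
    (tendsto_neg_atTop_atBot.comp tendsto_natCast_atTop_atTop))

lemma tendsto_cdf_nat_sub (a : ℝ) :
    Tendsto (fun n : ℕ => stdNormalCDF ((n:ℝ) - a)) atTop (nhds 1) :=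
  tendsto_cdf_atTop.comp (tendsto_atTop_add_const_right _ (-a)
    tendsto_natCast_atTop_atTop)

lemma integrableOn_GFun (a : ℝ) : MeasureTheory.IntegrableOn (GFun a) (Set.Ioo 0 1) := by
  set S : ℕ → Set ℝ := fun n => Set.Ioc (stdNormalCDF (-(n:ℝ))) (stdNormalCDF (n:ℝ)) with hS
  have hSsub : ∀ n, S n ⊆ Set.Ioo 0 1 := fun n s hs =>
    ⟨(cdf_pos _).trans hs.1, hs.2.trans_lt (cdf_lt_one _)⟩
  have hSIcc : ∀ n : ℕ, Set.Icc (stdNormalCDF (-(n:ℝ))) (stdNormalCDF (n:ℝ)) ⊆ Set.Ioo 0 1 :=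
    fun n s hs => ⟨(cdf_pos _).trans_le hs.1, hs.2.trans_lt (cdf_lt_one _)⟩
  have hInt : ∀ n : ℕ, MeasureTheory.IntegrableOn (GFun a) (S n) := fun n =>
    (((continuousOn_GFun a).mono (hSIcc n)).integrableOn_Icc).mono_set Set.Ioc_subset_Icc_self
  have hval : ∀ n : ℕ, ∫ s in S n, GFun a s ≤ Real.exp (a^2/2) := by
    intro n
    have hle : stdNormalCDF (-(n:ℝ)) ≤ stdNormalCDF (n:ℝ) :=
      strictMono_cdf.monotone (by
        have : (0:ℝ) ≤ (n:ℝ) := Nat.cast_nonneg n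
        linarith)
    rw [hS, ← intervalIntegral.integral_of_le hle, subG]
    have h1 : stdNormalCDF ((n:ℝ) - a) < 1 := cdf_lt_one _
    have h2 : 0 < stdNormalCDF (-(n:ℝ) - a) := cdf_pos _
    nlinarith [Real.exp_pos (a^2/2)]
  have hmeasG : MeasureTheory.AEStronglyMeasurable (GFun a) (volume.restrict (Set.Ioo 0 1)) :=
    (continuousOn_GFun a).aestronglyMeasurable measurableSet_Ioo
  refine ⟨hmeasG, ?_⟩
  have hnorm : ∀ s, ‖GFun a s‖ₑ = ENNReal.ofReal (GFun a s) := fun s =>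
    Real.enorm_eq_ofReal (GFun_pos a s).le
  unfold MeasureTheory.HasFiniteIntegral
  simp only [hnorm]
  set f : ℕ → ℝ → ENNReal := fun n => (S n).indicator (fun s => ENNReal.ofReal (GFun a s))
    with hf
  have h_ae_meas : ∀ n, AEMeasurable (f n) volume := by
    intro n
    rw [hf]
    rw [aemeasurable_indicator_iff measurableSet_Ioc]
    exact ENNReal.measurable_ofReal.comp_aemeasurable
      (((continuousOn_GFun a).mono (hSsub n)).aemeasurable measurableSet_Ioc)
  have hmono : Monotone S := fun m n hmn => Set.Ioc_subset_Ioc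
    (strictMono_cdf.monotone (neg_le_neg (Nat.cast_le.2 hmn)))
    (strictMono_cdf.monotone (Nat.cast_le.2 hmn))
  have hmono_f : ∀ s, Monotone fun n => f n s := fun s m n hmn =>
    Set.indicator_le_indicator_of_subset (hmono hmn) (fun _ => zero_le) s
  have hsup : ∀ s, (⨆ n, f n s) = (Set.Ioo 0 1).indicator
      (fun s => ENNReal.ofReal (GFun a s)) s := by
    intro s
    by_cases hs : s ∈ Set.Ioo (0:ℝ) 1
    · rw [Set.indicator_of_mem hs]
      refine le_antisymm (iSup_le fun n => ?_) ?_
      · by_cases h : s ∈ S n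
        · rw [hf]; simp only [Set.indicator_of_mem h]; exact le_rfl
        · rw [hf]; simp only [Set.indicator_of_notMem h]; exact zero_le
      · obtain ⟨m, hm0⟩ : ∃ m : ℕ, stdNormalCDF (-(m:ℝ)) < s :=
          (tendsto_cdf_neg_nat.eventually_lt_const hs.1).exists
        obtain ⟨m', hm1⟩ : ∃ m' : ℕ, s ≤ stdNormalCDF (m':ℝ) :=
          ((tendsto_cdf_nat.eventually_const_lt hs.2).mono fun n h => h.le).exists
        have hmem : s ∈ S (max m m') := by
          constructor
          · exact lt_of_le_of_lt (strictMono_cdf.monotone (by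
              push_cast; simp only [neg_le_neg_iff]; exact_mod_cast le_max_left m m')) hm0
          · exact hm1.trans (strictMono_cdf.monotone (by exact_mod_cast le_max_right m m'))
        refine le_iSup_of_le (max m m') ?_
        rw [hf]; simp only [Set.indicator_of_mem hmem]; exact le_rfl
    · rw [Set.indicator_of_notMem hs]
      refine le_antisymm (iSup_le fun n => ?_) zero_le
      have : s ∉ S n := fun h => hs (hSsub n h)
      rw [hf]; simp only [Set.indicator_of_notMem this]; exact le_rfl
  calc ∫⁻ s in Set.Ioo 0 1, ENNReal.ofReal (GFun a s)
      = ∫⁻ s, (Set.Ioo (0:ℝ) 1).indicator (fun s => ENNReal.ofReal (GFun a s)) s := by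
        rw [MeasureTheory.lintegral_indicator measurableSet_Ioo]
    _ = ∫⁻ s, ⨆ n, f n s := by
        refine MeasureTheory.lintegral_congr fun s => (hsup s).symm
    _ = ⨆ n, ∫⁻ s, f n s :=
        MeasureTheory.lintegral_iSup' h_ae_meas (MeasureTheory.ae_of_all _ hmono_f)
    _ ≤ ENNReal.ofReal (Real.exp (a^2/2)) := by
        refine iSup_le fun n => ?_
        rw [hf]
        rw [MeasureTheory.lintegral_indicator measurableSet_Ioc]
        rw [← MeasureTheory.ofReal_integral_eq_lintegral_ofReal (hInt n)
          (MeasureTheory.ae_of_all _ fun s => (GFun_pos a s).le)]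
        exact ENNReal.ofReal_le_ofReal (hval n)
    _ < ⊤ := ENNReal.ofReal_lt_top

lemma thetaG {a t : ℝ} (ht : t ∈ Set.Ioo (0:ℝ) 1) :
    ∫ s in (0:ℝ)..t, GFun a s
      = Real.exp (a^2/2) * stdNormalCDF (stdNormalQuantile t - a) := by
  set b := stdNormalQuantile t with hb
  have hΦb : stdNormalCDF b = t := cdf_quantile ht
  set T : ℕ → Set ℝ := fun n => Set.Ioc (stdNormalCDF (-(n:ℝ))) t with hT
  have hmono : Monotone T := fun m n hmn => Set.Ioc_subset_Ioc
    (strictMono_cdf.monotone (neg_le_neg (Nat.cast_le.2 hmn))) le_rfl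
  have hUnion : (⋃ n, T n) = Set.Ioc 0 t := by
    refine Set.Subset.antisymm (Set.iUnion_subset fun n s hs =>
      ⟨(cdf_pos _).trans hs.1, hs.2⟩) ?_
    intro s hs
    obtain ⟨n, hn⟩ : ∃ n : ℕ, stdNormalCDF (-(n:ℝ)) < s :=
      (tendsto_cdf_neg_nat.eventually_lt_const hs.1).exists
    exact Set.mem_iUnion.2 ⟨n, hn, hs.2⟩
  have hfi : MeasureTheory.IntegrableOn (GFun a) (Set.Ioc 0 t) :=
    (integrableOn_GFun a).mono_set fun s hs => ⟨hs.1, hs.2.trans_lt ht.2⟩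
  have htend := MeasureTheory.tendsto_setIntegral_of_monotone
    (fun n => measurableSet_Ioc) hmono (hUnion ▸ hfi)
  rw [hUnion] at htend
  have hev : ∀ᶠ n : ℕ in atTop, (∫ s in T n, GFun a s)
      = Real.exp (a^2/2) * (stdNormalCDF (b - a) - stdNormalCDF (-(n:ℝ) - a)) := by
    filter_upwards [tendsto_cdf_neg_nat.eventually_lt_const ht.1] with n hn
    rw [hT, ← hΦb, ← intervalIntegral.integral_of_le (by rw [hΦb]; exact hn.le), subG]
  have hlim : Tendsto (fun n : ℕ =>
      Real.exp (a^2/2) * (stdNormalCDF (b - a) - stdNormalCDF (-(n:ℝ) - a))) atTop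
      (nhds (Real.exp (a^2/2) * stdNormalCDF (b - a))) := by
    have := (tendsto_const_nhds (x := stdNormalCDF (b - a)) (f := atTop (α := ℕ))).sub
      (tendsto_cdf_neg_nat_sub a)
    simpa using (tendsto_const_nhds (x := Real.exp (a^2/2)) (f := atTop (α := ℕ))).mul this
  have := tendsto_nhds_unique (htend.congr' hev) hlim
  rw [intervalIntegral.integral_of_le ht.1.le, this]

lemma thetaG1 (a : ℝ) : ∫ s in (0:ℝ)..1, GFun a s = Real.exp (a^2/2) := by
  set S : ℕ → Set ℝ := fun n => Set.Ioc (stdNormalCDF (-(n:ℝ))) (stdNormalCDF (n:ℝ)) with hS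
  have hmono : Monotone S := fun m n hmn => Set.Ioc_subset_Ioc
    (strictMono_cdf.monotone (neg_le_neg (Nat.cast_le.2 hmn)))
    (strictMono_cdf.monotone (Nat.cast_le.2 hmn))
  have hUnion : (⋃ n, S n) = Set.Ioo 0 1 := by
    refine Set.Subset.antisymm (Set.iUnion_subset fun n s hs =>
      ⟨(cdf_pos _).trans hs.1, hs.2.trans_lt (cdf_lt_one _)⟩) ?_
    intro s hs
    obtain ⟨n, hn0⟩ : ∃ n : ℕ, stdNormalCDF (-(n:ℝ)) < s :=
      (tendsto_cdf_neg_nat.eventually_lt_const hs.1).exists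
    obtain ⟨m, hm1⟩ : ∃ m : ℕ, s ≤ stdNormalCDF (m:ℝ) :=
      ((tendsto_cdf_nat.eventually_const_lt hs.2).mono fun n h => h.le).exists
    refine Set.mem_iUnion.2 ⟨max n m, ?_, ?_⟩
    · exact lt_of_le_of_lt (strictMono_cdf.monotone
        (neg_le_neg (Nat.cast_le.2 (le_max_left n m)))) hn0
    · exact hm1.trans (strictMono_cdf.monotone (Nat.cast_le.2 (le_max_right n m)))
  have htend := MeasureTheory.tendsto_setIntegral_of_monotone
    (fun n => measurableSet_Ioc) hmono (hUnion ▸ (integrableOn_GFun a))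
  rw [hUnion] at htend
  have hev : ∀ n : ℕ, (∫ s in S n, GFun a s)
      = Real.exp (a^2/2) * (stdNormalCDF ((n:ℝ) - a) - stdNormalCDF (-(n:ℝ) - a)) := by
    intro n
    have hle : stdNormalCDF (-(n:ℝ)) ≤ stdNormalCDF (n:ℝ) :=
      strictMono_cdf.monotone (by
        have : (0:ℝ) ≤ (n:ℝ) := Nat.cast_nonneg n
        linarith)
    rw [hS, ← intervalIntegral.integral_of_le hle, subG]
  have hlim : Tendsto (fun n : ℕ =>
      Real.exp (a^2/2) * (stdNormalCDF ((n:ℝ) - a) - stdNormalCDF (-(n:ℝ) - a))) atTop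
      (nhds (Real.exp (a^2/2))) := by
    have := (tendsto_cdf_nat_sub a).sub (tendsto_cdf_neg_nat_sub a)
    simpa using (tendsto_const_nhds (x := Real.exp (a^2/2)) (f := atTop (α := ℕ))).mul this
  have := tendsto_nhds_unique (Filter.Tendsto.congr hev htend) hlim
  rw [intervalIntegral.integral_of_le (by norm_num : (0:ℝ) ≤ 1),
    MeasureTheory.integral_Ioc_eq_integral_Ioo, this]
lemma lemmaA (g : ℝ → ℝ) (hg : Measurable g) (m : ℝ) (hm : 0 < m)
    (hbd : ∀ z ∈ Set.Icc (0:ℝ) 1, m ≤ g z)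
    (hbd' : ∃ M', ∀ z ∈ Set.Icc (0:ℝ) 1, g z ≤ M')
    (H : ℝ → ℝ) (hHdef : ∀ z, H z = ∫ x in (0:ℝ)..z, g x)
    (F : ℝ → ℝ) (hF : ContinuousOn F (Set.Ioo 0 1)) (hFpos : ∀ s, 0 < F s)
    {r : ℝ} (hr : r ∈ Set.Ioc (0:ℝ) 1) :
    ∫ z in (0:ℝ)..r, g z * F (H z / H 1) = H 1 * ∫ s in (0:ℝ)..(H r / H 1), F s := by
  obtain ⟨M', hM'⟩ := hbd'
  -- integrability of g on [0,1]
  have hIntIcc : MeasureTheory.IntegrableOn g (Set.Icc 0 1) := by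
    refine MeasureTheory.Measure.integrableOn_of_bounded (M := max M' (-(m))) ?_ ?_ ?_
    · simp [Real.volume_Icc]
    · exact hg.aestronglyMeasurable
    · refine (MeasureTheory.ae_restrict_iff' measurableSet_Icc).2
        (MeasureTheory.ae_of_all _ fun z hz => ?_)
      rw [Real.norm_eq_abs, abs_le]
      constructor
      · have := hbd z hz; have := le_max_right M' (-(m)); linarith [hbd z hz]
      · exact (hM' z hz).trans (le_max_left _ _)
  have hivl : ∀ {s t : ℝ}, s ∈ Set.Icc (0:ℝ) 1 → t ∈ Set.Icc (0:ℝ) 1 →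
      IntervalIntegrable g volume s t := by
    intro s t hs ht
    rw [intervalIntegrable_iff]
    exact hIntIcc.mono_set ((Set.uIoc_subset_uIcc).trans
      (Set.uIcc_subset_Icc hs ht))
  have hzero : H 0 = 0 := by rw [hHdef]; simp
  have hIoc : ∀ {s t : ℝ}, s ∈ Set.Icc (0:ℝ) 1 → t ∈ Set.Icc (0:ℝ) 1 → s ≤ t →
      H t - H s = ∫ z in Set.Ioc s t, g z := by
    intro s t hs ht hst
    rw [hHdef, hHdef,
      intervalIntegral.integral_interval_sub_left (hivl ⟨le_rfl, zero_le_one⟩ ht)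
        (hivl ⟨le_rfl, zero_le_one⟩ hs),
      intervalIntegral.integral_of_le hst]
  have hlb : ∀ {s t : ℝ}, s ∈ Set.Icc (0:ℝ) 1 → t ∈ Set.Icc (0:ℝ) 1 → s ≤ t →
      m * (t - s) ≤ H t - H s := by
    intro s t hs ht hst
    have h1 : H t - H s = ∫ z in s..t, g z := by
      rw [hHdef, hHdef, intervalIntegral.integral_interval_sub_left
        (hivl ⟨le_rfl, zero_le_one⟩ ht) (hivl ⟨le_rfl, zero_le_one⟩ hs)]
    have h2 : (∫ _ in s..t, m) ≤ ∫ z in s..t, g z := by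
      refine intervalIntegral.integral_mono_on hst intervalIntegrable_const
        (hivl hs ht) fun z hz => hbd z ⟨hs.1.trans hz.1, hz.2.trans ht.2⟩
    rw [intervalIntegral.integral_const, smul_eq_mul, mul_comm] at h2
    linarith
  have H1pos : 0 < H 1 := by
    have := hlb (Set.left_mem_Icc.2 zero_le_one) (Set.right_mem_Icc.2 zero_le_one) zero_le_one
    rw [hzero] at this; linarith
  have hmonoH : ∀ {s t : ℝ}, s ∈ Set.Icc (0:ℝ) 1 → t ∈ Set.Icc (0:ℝ) 1 → s < t →
      H s < H t := by
    intro s t hs ht hst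
    have := hlb hs ht hst.le
    nlinarith
  set u : ℝ → ℝ := fun z => H z / H 1 with hu
  have ucont : ContinuousOn u (Set.Icc 0 1) := by
    have hprim : ContinuousOn (fun z => ∫ x in (0:ℝ)..z, g x) (Set.Icc 0 1) := by
      have := intervalIntegral.continuousOn_primitive_interval (a := 0) (b := 1)
        (μ := volume) (f := g) (by rw [Set.uIcc_of_le zero_le_one]; exact hIntIcc)
      rwa [Set.uIcc_of_le zero_le_one] at this
    exact (hprim.congr fun z _ => (hHdef z)).div_const _
  have ustrict : StrictMonoOn u (Set.Icc 0 1) := by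
    intro s hs t ht hst
    exact div_lt_div_of_pos_right (hmonoH hs ht hst) H1pos
  have u0 : u 0 = 0 := by simp [hu, hzero]
  have u1 : u 1 = 1 := by
    simp only [hu]; field_simp
  have umem : ∀ z ∈ Set.Icc (0:ℝ) 1, u z ∈ Set.Icc (0:ℝ) 1 := by
    intro z hz
    constructor
    · rw [← u0]
      rcases eq_or_lt_of_le hz.1 with h | h
      · rw [← h]
      · exact (ustrict (Set.left_mem_Icc.2 zero_le_one) hz h).le
    · rw [← u1]
      rcases eq_or_lt_of_le hz.2 with h | h
      · rw [h]
      · exact (ustrict hz (Set.right_mem_Icc.2 zero_le_one) h).le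
  have upos : ∀ z ∈ Set.Ioc (0:ℝ) 1, 0 < u z := by
    intro z hz
    rw [← u0]
    exact ustrict (Set.left_mem_Icc.2 zero_le_one) ⟨hz.1.le, hz.2⟩ hz.1
  -- clamp and global version of u
  set cl : ℝ → ℝ := fun z => max 0 (min 1 z) with hcl
  have hclmem : ∀ z, cl z ∈ Set.Icc (0:ℝ) 1 :=
    fun z => ⟨le_max_left _ _, max_le zero_le_one (min_le_left _ _)⟩
  have hcleq : ∀ z ∈ Set.Icc (0:ℝ) 1, cl z = z := by
    intro z hz
    rw [hcl]
    simp only [min_eq_right hz.2, max_eq_right hz.1]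
  set ut : ℝ → ℝ := fun z => u (cl z) with hut
  have hutcont : Continuous ut :=
    ucont.comp_continuous (continuous_const.max (continuous_const.min continuous_id)) hclmem
  have huteq : ∀ z ∈ Set.Icc (0:ℝ) 1, ut z = u z := fun z hz => by
    rw [hut]; simp only []; rw [hcleq z hz]
  -- IVT for u
  have hsurj : ∀ b ∈ Set.Icc (0:ℝ) 1, ∃ z ∈ Set.Icc (0:ℝ) 1, u z = b := by
    intro b hb
    have h := intermediate_value_Icc zero_le_one ucont
    rw [u0, u1] at h
    obtain ⟨z, hz, hz2⟩ := h hb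
    exact ⟨z, hz, hz2⟩
  -- the density measure
  set gnn : ℝ → NNReal := fun z => Real.toNNReal (g z) with hgnn
  have hgnnmeas : Measurable gnn := measurable_real_toNNReal.comp hg
  set ν := volume.restrict (Set.Ioc (0:ℝ) 1) with hν
  set μ := ν.withDensity (fun z => (gnn z : ENNReal)) with hμ
  have hμapply : ∀ S : Set ℝ, MeasurableSet S →
      μ S = ∫⁻ z in S ∩ Set.Ioc 0 1, ENNReal.ofReal (g z) := by
    intro S hS
    rw [hμ, MeasureTheory.withDensity_apply _ hS, hν,
      MeasureTheory.Measure.restrict_restrict hS]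
    rfl
  have L1 : ∀ {s t : ℝ}, s ∈ Set.Icc (0:ℝ) 1 → t ∈ Set.Icc (0:ℝ) 1 → s ≤ t →
      ∫⁻ z in Set.Ioc s t, ENNReal.ofReal (g z) = ENNReal.ofReal (H t - H s) := by
    intro s t hs ht hst
    rw [← MeasureTheory.ofReal_integral_eq_lintegral_ofReal
      (hIntIcc.mono_set (Set.Ioc_subset_Icc_self.trans (Set.Icc_subset_Icc hs.1 ht.2)))
      ((MeasureTheory.ae_restrict_iff' measurableSet_Ioc).2 (MeasureTheory.ae_of_all _
        fun z hz => (hm.le.trans (hbd z ⟨hs.1.trans hz.1.le, hz.2.trans ht.2⟩))))]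
    rw [hIoc hs ht hst]
  haveI hfinμ : MeasureTheory.IsFiniteMeasure μ := by
    constructor
    rw [hμapply _ MeasurableSet.univ, Set.univ_inter,
      L1 (Set.left_mem_Icc.2 zero_le_one) (Set.right_mem_Icc.2 zero_le_one) zero_le_one]
    exact ENNReal.ofReal_lt_top
  -- the pushforward identity
  have key : MeasureTheory.Measure.map ut μ = ENNReal.ofReal (H 1) • ν := by
    haveI := MeasureTheory.Measure.isFiniteMeasure_map μ ut
    refine MeasureTheory.Measure.ext_of_Iic _ _ (fun b => ?_)
    rw [MeasureTheory.Measure.map_apply hutcont.measurable measurableSet_Iic,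
      hμapply _ (hutcont.measurable measurableSet_Iic)]
    rw [MeasureTheory.Measure.smul_apply, hν, MeasureTheory.Measure.restrict_apply
      measurableSet_Iic]
    rcases le_or_gt 1 b with hb1 | hb1
    · have hset : ut ⁻¹' Set.Iic b ∩ Set.Ioc 0 1 = Set.Ioc 0 1 := by
        refine Set.inter_eq_right.2 fun z hz => ?_
        have : ut z = u z := huteq z ⟨hz.1.le, hz.2⟩
        simp only [Set.mem_preimage, Set.mem_Iic, this]
        exact (umem z ⟨hz.1.le, hz.2⟩).2.trans hb1
      have hset2 : Set.Iic b ∩ Set.Ioc (0:ℝ) 1 = Set.Ioc 0 1 := by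
        refine Set.inter_eq_right.2 fun z hz => hz.2.trans hb1
      rw [hset, hset2]
      have := L1 (Set.left_mem_Icc.2 zero_le_one) (Set.right_mem_Icc.2 zero_le_one) zero_le_one
      rw [this, hzero, Real.volume_Ioc, smul_eq_mul]
      rw [← ENNReal.ofReal_mul H1pos.le]
      norm_num
    rcases le_or_gt b 0 with hb0 | hb0
    · have hset : ut ⁻¹' Set.Iic b ∩ Set.Ioc 0 1 = ∅ := by
        ext z
        simp only [Set.mem_inter_iff, Set.mem_preimage, Set.mem_Iic, Set.mem_empty_iff_false,
          iff_false, not_and]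
        intro hzb hz
        rw [huteq z ⟨hz.1.le, hz.2⟩] at hzb
        exact absurd hzb (not_le.2 ((hb0.trans_lt (upos z hz))))
      have hset2 : Set.Iic b ∩ Set.Ioc (0:ℝ) 1 = ∅ :=
        Set.eq_empty_iff_forall_notMem.2 fun z hz =>
          absurd (hz.1.trans hb0) (not_le.2 hz.2.1)
      rw [hset, hset2]
      simp
    · -- 0 < b < 1
      obtain ⟨zb, hzbmem, hzbeq⟩ := hsurj b ⟨hb0.le, hb1.le⟩
      have hset : ut ⁻¹' Set.Iic b ∩ Set.Ioc 0 1 = Set.Ioc 0 zb := by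
        ext z
        simp only [Set.mem_inter_iff, Set.mem_preimage, Set.mem_Iic, Set.mem_Ioc]
        constructor
        · rintro ⟨hzb, hz0, hz1⟩
          refine ⟨hz0, ?_⟩
          rw [huteq z ⟨hz0.le, hz1⟩, ← hzbeq] at hzb
          by_contra hcon
          push_neg at hcon
          exact absurd hzb (not_le.2 (ustrict hzbmem ⟨hz0.le, hz1⟩ hcon))
        · rintro ⟨hz0, hzzb⟩
          have hz1 : z ≤ 1 := hzzb.trans hzbmem.2
          refine ⟨?_, hz0, hz1⟩
          rw [huteq z ⟨hz0.le, hz1⟩, ← hzbeq]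
          rcases eq_or_lt_of_le hzzb with h | h
          · rw [h]
          · exact (ustrict ⟨hz0.le, hz1⟩ hzbmem h).le
      have hset2 : Set.Iic b ∩ Set.Ioc (0:ℝ) 1 = Set.Ioc 0 b := by
        ext z
        simp only [Set.mem_inter_iff, Set.mem_Iic, Set.mem_Ioc]
        exact ⟨fun ⟨h1, h2, h3⟩ => ⟨h2, h1⟩, fun ⟨h1, h2⟩ => ⟨h2, h1, h2.trans hb1.le⟩⟩
      rw [hset, hset2, L1 (Set.left_mem_Icc.2 zero_le_one) hzbmem hzbmem.1, hzero,
        Real.volume_Ioc, smul_eq_mul, ← ENNReal.ofReal_mul H1pos.le]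
      have : H zb = H 1 * b := by
        rw [← hzbeq, hu]; field_simp
      rw [this]
      norm_num
  -- now the integral identity
  have htr : u r ∈ Set.Ioc (0:ℝ) 1 := ⟨upos r hr, (umem r ⟨hr.1.le, hr.2⟩).2⟩
  set t := u r with htdef
  -- step 2 prerequisites
  have hFasm : MeasureTheory.AEStronglyMeasurable ((Set.Ioc (0:ℝ) t).indicator F)
      (MeasureTheory.Measure.map ut μ) := by
    rw [key]
    have base : MeasureTheory.AEStronglyMeasurable ((Set.Ioc (0:ℝ) t).indicator F) ν := by
      have hνeq : ν = volume.restrict (Set.Ioo (0:ℝ) 1) := by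
        rw [hν, MeasureTheory.Measure.restrict_congr_set MeasureTheory.Ioo_ae_eq_Ioc]
      rw [hνeq]
      exact (hF.aestronglyMeasurable measurableSet_Ioo).indicator measurableSet_Ioc
    exact base.mono_ac MeasureTheory.Measure.smul_absolutelyContinuous
  have step2 : ∫ s, (Set.Ioc (0:ℝ) t).indicator F s ∂(MeasureTheory.Measure.map ut μ)
      = ∫ z, (Set.Ioc (0:ℝ) t).indicator F (ut z) ∂μ :=
    MeasureTheory.integral_map hutcont.aemeasurable hFasm
  have step1 : ∫ s, (Set.Ioc (0:ℝ) t).indicator F s ∂(MeasureTheory.Measure.map ut μ)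
      = H 1 * ∫ s in (0:ℝ)..t, F s := by
    rw [key, MeasureTheory.integral_smul_measure, MeasureTheory.integral_indicator
      measurableSet_Ioc, hν, MeasureTheory.Measure.restrict_restrict measurableSet_Ioc,
      Set.inter_eq_left.2 (Set.Ioc_subset_Ioc le_rfl htr.2),
      intervalIntegral.integral_of_le htr.1.le]
    rw [ENNReal.toReal_ofReal H1pos.le, smul_eq_mul]
  have step3 : ∫ z, (Set.Ioc (0:ℝ) t).indicator F (ut z) ∂μ
      = ∫ z, (gnn z : ℝ) • ((Set.Ioc (0:ℝ) t).indicator F (ut z)) ∂ν := by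
    rw [hμ]
    exact integral_withDensity_eq_integral_smul₀ hgnnmeas.aemeasurable _
  have step4 : ∫ z, (gnn z : ℝ) • ((Set.Ioc (0:ℝ) t).indicator F (ut z)) ∂ν
      = ∫ z in (0:ℝ)..r, g z * F (H z / H 1) := by
    rw [intervalIntegral.integral_of_le hr.1.le, ← MeasureTheory.integral_indicator
      (measurableSet_Ioc (a := (0:ℝ)) (b := r))]
    have hsub : Set.Ioc (0:ℝ) r ⊆ Set.Ioc (0:ℝ) 1 := Set.Ioc_subset_Ioc le_rfl hr.2
    rw [show ∫ z, (Set.Ioc (0:ℝ) r).indicator (fun z => g z * F (H z / H 1)) z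
        = ∫ z, (Set.Ioc (0:ℝ) r).indicator (fun z => g z * F (H z / H 1)) z ∂ν from ?_]
    · refine MeasureTheory.integral_congr_ae ?_
      rw [hν]
      refine (MeasureTheory.ae_restrict_iff' measurableSet_Ioc).2
        (MeasureTheory.ae_of_all _ fun z hz => ?_)
      have hgz : (gnn z : ℝ) = g z := by
        rw [hgnn]
        exact Real.coe_toNNReal _ (hm.le.trans (hbd z ⟨hz.1.le, hz.2⟩))
      have hutz : ut z = u z := huteq z ⟨hz.1.le, hz.2⟩
      by_cases hzr : z ∈ Set.Ioc (0:ℝ) r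
      · have hmem : ut z ∈ Set.Ioc (0:ℝ) t := by
          rw [hutz, htdef]
          refine ⟨upos z hz, ?_⟩
          rcases eq_or_lt_of_le hzr.2 with h | h
          · rw [h]
          · exact (ustrict ⟨hz.1.le, hz.2⟩ ⟨hr.1.le, hr.2⟩ h).le
        have hmem' : u z ∈ Set.Ioc (0:ℝ) t := hutz ▸ hmem
        simp only [hutz, Set.indicator_of_mem hmem', Set.indicator_of_mem hzr, hgz,
          smul_eq_mul, hu]
        exact congrArg (g z * ·) (Set.indicator_of_mem hmem' F)
      · have hmem : ut z ∉ Set.Ioc (0:ℝ) t := by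
          rw [hutz]
          intro hcon
          refine hzr ⟨hz.1, ?_⟩
          by_contra hcon2
          push_neg at hcon2
          exact absurd hcon.2 (not_le.2 (htdef ▸ ustrict ⟨hr.1.le, hr.2⟩ ⟨hz.1.le, hz.2⟩ hcon2))
        have hmem' : u z ∉ Set.Ioc (0:ℝ) t := hutz ▸ hmem
        simp only [hutz, Set.indicator_of_notMem hmem', Set.indicator_of_notMem hzr,
          smul_zero, mul_zero]
    · rw [hν, MeasureTheory.integral_indicator measurableSet_Ioc,
        MeasureTheory.integral_indicator measurableSet_Ioc,
        MeasureTheory.Measure.restrict_restrict measurableSet_Ioc,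
        Set.inter_eq_left.2 hsub]
  rw [← step4, ← step3, ← step2, step1]
lemma Hmono_lemma (g : ℝ → ℝ) (m : ℝ) (hm : 0 < m)
    (hbd : ∀ z ∈ Set.Icc (0:ℝ) 1, m ≤ g z)
    (hbd' : ∃ M', ∀ z ∈ Set.Icc (0:ℝ) 1, g z ≤ M')
    (hg : Measurable g)
    (H : ℝ → ℝ) (hHdef : ∀ z, H z = ∫ x in (0:ℝ)..z, g x)
    {s t : ℝ} (hs : s ∈ Set.Icc (0:ℝ) 1) (ht : t ∈ Set.Icc (0:ℝ) 1) (hst : s < t) :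
    H s < H t := by
  obtain ⟨M', hM'⟩ := hbd'
  have hIntIcc : MeasureTheory.IntegrableOn g (Set.Icc 0 1) := by
    refine MeasureTheory.Measure.integrableOn_of_bounded (M := max M' (-(m))) ?_ ?_ ?_
    · simp [Real.volume_Icc]
    · exact hg.aestronglyMeasurable
    · refine (MeasureTheory.ae_restrict_iff' measurableSet_Icc).2
        (MeasureTheory.ae_of_all _ fun z hz => ?_)
      rw [Real.norm_eq_abs, abs_le]
      constructor
      · have := le_max_right M' (-(m)); linarith [hbd z hz]
      · exact (hM' z hz).trans (le_max_left _ _)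
  have hivl : ∀ {s' t' : ℝ}, s' ∈ Set.Icc (0:ℝ) 1 → t' ∈ Set.Icc (0:ℝ) 1 →
      IntervalIntegrable g volume s' t' := by
    intro s' t' hs' ht'
    rw [intervalIntegrable_iff]
    exact hIntIcc.mono_set ((Set.uIoc_subset_uIcc).trans (Set.uIcc_subset_Icc hs' ht'))
  have h1 : H t - H s = ∫ z in s..t, g z := by
    rw [hHdef, hHdef, intervalIntegral.integral_interval_sub_left
      (hivl ⟨le_rfl, zero_le_one⟩ ht) (hivl ⟨le_rfl, zero_le_one⟩ hs)]
  have h2 : (∫ _ in s..t, m) ≤ ∫ z in s..t, g z := by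
    refine intervalIntegral.integral_mono_on hst.le intervalIntegrable_const
      (hivl hs ht) fun z hz => hbd z ⟨hs.1.trans hz.1, hz.2.trans ht.2⟩
  rw [intervalIntegral.integral_const, smul_eq_mul] at h2
  nlinarith

theorem quantile_shift_linear_reward
    (x_nom σ T c p : ℝ) (hσ : 0 < σ) (hT : 0 < T) (hc : 0 < c)
    (B : ℝ → ℝ) (hBmeas : Measurable B)
    (hBbd : ∃ M, ∀ r ∈ Set.Icc (0:ℝ) 1, |B r| ≤ M)
    (hBanti : AntitoneOn B (Set.Icc 0 1))
    (H : ℝ → ℝ)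
    (hH : ∀ r, H r = ∫ z in (0:ℝ)..r, Real.exp (-(B z) / (2 * c * σ^2)))
    (qν : ℝ → ℝ)
    (hqν : ∀ r, qν r = x_nom + σ * Real.sqrt T * stdNormalQuantile (H r / H 1))
    (qμ : ℝ → ℝ)
    (hqμ : ∀ r, qμ r = qν r - p * T / (2 * c)) :
    ∀ r ∈ Set.Ioo (0:ℝ) 1,
      stdNormalCDF ((qμ r - x_nom) / (σ * Real.sqrt T))
        = (∫ z in (0:ℝ)..r, Real.exp (-(B z - p * qμ z) / (2 * c * σ^2)))
          / (∫ z in (0:ℝ)..1, Real.exp (-(B z - p * qμ z) / (2 * c * σ^2))) := by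
  intro r hr
  obtain ⟨M, hM⟩ := hBbd
  have hst : Real.sqrt T * Real.sqrt T = T := Real.mul_self_sqrt hT.le
  have hstpos : 0 < Real.sqrt T := Real.sqrt_pos.2 hT
  set k := 2 * c * σ^2 with hk
  have hkpos : 0 < k := by rw [hk]; positivity
  set g : ℝ → ℝ := fun z => Real.exp (-(B z) / k) with hgdef
  have hgmeas : Measurable g := Real.measurable_exp.comp ((hBmeas.neg).div_const k)
  have hH' : ∀ s : ℝ, H s = ∫ x in (0:ℝ)..s, g x := fun s => hH s
  set a := p * Real.sqrt T / (2 * c * σ) with ha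
  set C := Real.exp (p * x_nom / k - a^2) with hC
  have hCpos : 0 < C := Real.exp_pos _
  have hqμ' : ∀ z, qμ z = qν z - p * Real.sqrt T * Real.sqrt T / (2 * c) := by
    intro z
    rw [hqμ z, mul_assoc, hst]
  -- pointwise algebra
  have halg : ∀ z, Real.exp (-(B z - p * qμ z) / k) = C * (g z * GFun a (H z / H 1)) := by
    intro z
    rw [hqμ' z, hqν z, hC, hgdef]
    simp only [GFun]
    rw [← Real.exp_add, ← Real.exp_add]
    congr 1
    rw [hk, ha]
    field_simp
    ring
  -- bounds on g
  have hmlb : ∀ z ∈ Set.Icc (0:ℝ) 1, Real.exp (-M / k) ≤ g z := by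
    intro z hz
    rw [hgdef]
    refine Real.exp_le_exp.2 ?_
    have hBz := abs_le.1 (hM z hz)
    exact div_le_div_of_nonneg_right (by linarith) hkpos.le
  have hub : ∃ M', ∀ z ∈ Set.Icc (0:ℝ) 1, g z ≤ M' := by
    refine ⟨Real.exp (M / k), fun z hz => ?_⟩
    rw [hgdef]
    refine Real.exp_le_exp.2 ?_
    have hBz := abs_le.1 (hM z hz)
    exact div_le_div_of_nonneg_right (by linarith) hkpos.le
  -- monotonicity facts for H
  have hmono : ∀ {s t : ℝ}, s ∈ Set.Icc (0:ℝ) 1 → t ∈ Set.Icc (0:ℝ) 1 → s < t →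
      H s < H t := fun hs ht hst' =>
    Hmono_lemma g _ (Real.exp_pos _) hmlb hub hgmeas H hH' hs ht hst'
  have h0 : H 0 = 0 := by rw [hH' 0, intervalIntegral.integral_same]
  have hHr_pos : 0 < H r := by
    have := hmono (Set.left_mem_Icc.2 zero_le_one) ⟨hr.1.le, hr.2.le⟩ hr.1
    rwa [h0] at this
  have hHr_lt : H r < H 1 := hmono ⟨hr.1.le, hr.2.le⟩ (Set.right_mem_Icc.2 zero_le_one) hr.2
  have hH1pos : 0 < H 1 := hHr_pos.trans hHr_lt
  have hur : H r / H 1 ∈ Set.Ioo (0:ℝ) 1 :=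
    ⟨div_pos hHr_pos hH1pos, (div_lt_one hH1pos).2 hHr_lt⟩
  have hu1 : H 1 / H 1 = 1 := div_self hH1pos.ne'
  -- rewrite the numerator and denominator
  have hnum : ∀ s : ℝ, (∫ z in (0:ℝ)..s, Real.exp (-(B z - p * qμ z) / k))
      = C * ∫ z in (0:ℝ)..s, g z * GFun a (H z / H 1) := by
    intro s
    rw [← intervalIntegral.integral_const_mul]
    exact intervalIntegral.integral_congr fun z _ => halg z
  have hA : ∀ {s : ℝ}, s ∈ Set.Ioc (0:ℝ) 1 →
      (∫ z in (0:ℝ)..s, g z * GFun a (H z / H 1))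
        = H 1 * ∫ w in (0:ℝ)..(H s / H 1), GFun a w :=
    fun hs => lemmaA g hgmeas _ (Real.exp_pos (-M / k)) hmlb hub H hH' (GFun a)
      (continuousOn_GFun a) (GFun_pos a) hs
  have hnumr : (∫ z in (0:ℝ)..r, Real.exp (-(B z - p * qμ z) / k))
      = C * (H 1 * (Real.exp (a^2/2)
          * stdNormalCDF (stdNormalQuantile (H r / H 1) - a))) := by
    rw [hnum r, hA ⟨hr.1, hr.2.le⟩, thetaG hur]
  have hnum1 : (∫ z in (0:ℝ)..1, Real.exp (-(B z - p * qμ z) / k))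
      = C * (H 1 * Real.exp (a^2/2)) := by
    rw [hnum 1, hA ⟨zero_lt_one, le_rfl⟩, hu1, thetaG1]
  -- the LHS argument
  have hlhs : (qμ r - x_nom) / (σ * Real.sqrt T) = stdNormalQuantile (H r / H 1) - a := by
    rw [hqμ' r, hqν r, ha]
    field_simp
    ring
  rw [hnumr, hnum1, hlhs]
  have hE : (0:ℝ) < Real.exp (a^2/2) := Real.exp_pos _
  field_simp
end

section
/- For a purely rank-based reward B that is bounded and non-increasing, the equilibrium quantile function q_ν(r) = x_nom + σ√T · N⁻¹(H(r)/H(1)), where H(r) = ∫₀^r exp(−B(z)/(2cσ²)) dz, defines a strictly increasing function on (0,1), and the corresponding distribution stochastically dominates (is pointwise ≤ in quantile) the quantile of the Gaussian N(x_nom, σ²T): q_ν(r) ≤ x_nom + σ√T·N⁻¹(r) for all r ∈ (0,1) if and only if B is such that exp(−B/(2cσ²)) is non-decreasing, which always holds when B is non-increasing. -/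
open MeasureTheory Set Filter Topology

namespace Aux

noncomputable def phi (t : ℝ) : ℝ := (1 / Real.sqrt (2 * Real.pi)) * Real.exp (-t^2 / 2)

lemma phi_pos (t : ℝ) : 0 < phi t := by
  have h : 0 < Real.sqrt (2 * Real.pi) := Real.sqrt_pos.2 (by positivity)
  exact mul_pos (by positivity) (Real.exp_pos _)

lemma phi_int : Integrable phi := by
  have h : phi = fun t => (1 / Real.sqrt (2 * Real.pi)) * Real.exp (-(1/2 : ℝ) * t^2) := by
    funext t; unfold phi; congr 1; ring_nf
  rw [h]
  exact (integrable_exp_neg_mul_sq (by norm_num)).const_mul _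

lemma phi_total : ∫ t, phi t = 1 := by
  have h : ∀ t : ℝ, phi t = (1 / Real.sqrt (2 * Real.pi)) * Real.exp (-(1/2 : ℝ) * t^2) := by
    intro t; unfold phi; congr 1; ring_nf
  simp_rw [h]
  rw [integral_const_mul, integral_gaussian]
  have h2 : Real.pi / (1/2 : ℝ) = 2 * Real.pi := by ring
  rw [h2]
  have h3 : (0:ℝ) < Real.sqrt (2 * Real.pi) := Real.sqrt_pos.2 (by positivity)
  field_simp

lemma cdf_eq (x : ℝ) : stdNormalCDF x = ∫ t in Set.Iic x, phi t := rfl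

lemma cdf_sub (a b : ℝ) : stdNormalCDF b - stdNormalCDF a = ∫ t in a..b, phi t := by
  rw [cdf_eq, cdf_eq]
  exact intervalIntegral.integral_Iic_sub_Iic phi_int.integrableOn phi_int.integrableOn

lemma cdf_strictMono : StrictMono stdNormalCDF := by
  intro a b hab
  have h := cdf_sub a b
  have hpos : 0 < ∫ t in a..b, phi t :=
    intervalIntegral.intervalIntegral_pos_of_pos phi_int.intervalIntegrable phi_pos hab
  linarith

lemma cdf_continuous : Continuous stdNormalCDF := by
  have h : ∀ x, stdNormalCDF x = stdNormalCDF 0 + ∫ t in (0:ℝ)..x, phi t := by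
    intro x
    have := cdf_sub 0 x
    linarith
  have he : stdNormalCDF = fun x => stdNormalCDF 0 + ∫ t in (0:ℝ)..x, phi t := funext h
  rw [he]
  exact continuous_const.add
    (intervalIntegral.continuous_primitive (fun a b => phi_int.intervalIntegrable) 0)

lemma cdf_tendsto_atTop : Tendsto (fun n : ℕ => stdNormalCDF n) atTop (𝓝 1) := by
  have h := tendsto_setIntegral_of_monotone (μ := volume) (f := phi)
    (s := fun n : ℕ => Set.Iic (n : ℝ)) (fun n => measurableSet_Iic)
    (fun m n hmn => Iic_subset_Iic.2 (by exact_mod_cast hmn)) ?_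
  · have hu : ⋃ n : ℕ, Set.Iic ((n : ℝ)) = Set.univ := by
      ext x
      simp only [Set.mem_iUnion, Set.mem_Iic, Set.mem_univ, iff_true]
      exact exists_nat_ge x
    rw [hu, MeasureTheory.setIntegral_univ, phi_total] at h
    exact h
  · rw [show (⋃ n : ℕ, Set.Iic ((n : ℝ))) = Set.univ from by
      ext x; simp only [Set.mem_iUnion, Set.mem_Iic, Set.mem_univ, iff_true]; exact exists_nat_ge x]
    simpa using phi_int

lemma cdf_tendsto_atBot : Tendsto (fun n : ℕ => stdNormalCDF (-n)) atTop (𝓝 0) := by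
  have h := tendsto_setIntegral_of_antitone (μ := volume) (f := phi)
    (s := fun n : ℕ => Set.Iic (-(n : ℝ))) (fun n => measurableSet_Iic)
    (fun m n hmn => Iic_subset_Iic.2 (by exact_mod_cast neg_le_neg (Nat.cast_le.2 hmn))) ⟨0, phi_int.integrableOn⟩
  have hi : ⋂ n : ℕ, Set.Iic (-(n : ℝ)) = ∅ := by
    ext x
    simp only [Set.mem_iInter, Set.mem_Iic, Set.mem_empty_iff_false, iff_false, not_forall, not_le]
    obtain ⟨n, hn⟩ := exists_nat_gt (-x)
    exact ⟨n, by linarith⟩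
  rw [hi] at h
  simpa [cdf_eq] using h

lemma cdf_surj {p : ℝ} (hp : p ∈ Set.Ioo (0:ℝ) 1) : ∃ x, stdNormalCDF x = p := by
  obtain ⟨n, hn⟩ := (cdf_tendsto_atBot.eventually (eventually_lt_nhds hp.1)).exists
  obtain ⟨m, hm⟩ := (cdf_tendsto_atTop.eventually (eventually_gt_nhds hp.2)).exists
  have hle : (-(n:ℝ)) ≤ m := by
    by_contra hcon
    push_neg at hcon
    exact absurd (cdf_strictMono hcon) (by linarith)
  obtain ⟨x, _, hx⟩ := intermediate_value_Icc hle cdf_continuous.continuousOn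
    ⟨hn.le, hm.le⟩
  exact ⟨x, hx⟩

lemma quantile_eq {p : ℝ} (hp : p ∈ Set.Ioo (0:ℝ) 1) :
    stdNormalCDF (stdNormalQuantile p) = p :=
  Function.invFun_eq (cdf_surj hp)

lemma quantile_strictMonoOn : StrictMonoOn stdNormalQuantile (Set.Ioo 0 1) := by
  intro p hp q hq hpq
  by_contra hcon
  push_neg at hcon
  have := cdf_strictMono.monotone hcon
  rw [quantile_eq hp, quantile_eq hq] at this
  linarith

lemma quantile_monoOn : MonotoneOn stdNormalQuantile (Set.Ioo 0 1) :=
  quantile_strictMonoOn.monotoneOn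

end Aux

theorem equilibrium_quantile_mono_and_dominated
    (x_nom σ T c : ℝ) (hσ : 0 < σ) (hT : 0 < T) (hc : 0 < c)
    (B : ℝ → ℝ) (hBmeas : Measurable B)
    (hBbd : ∃ M, ∀ r ∈ Set.Icc (0:ℝ) 1, |B r| ≤ M)
    (hBanti : AntitoneOn B (Set.Icc 0 1))
    (H : ℝ → ℝ)
    (hH : ∀ r, H r = ∫ z in (0:ℝ)..r, Real.exp (-(B z) / (2 * c * σ^2)))
    (qν : ℝ → ℝ)
    (hqν : ∀ r, qν r = x_nom + σ * Real.sqrt T * stdNormalQuantile (H r / H 1)) :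
    StrictMonoOn qν (Set.Ioo 0 1)
    ∧ ∀ r ∈ Set.Ioo (0:ℝ) 1,
        qν r ≤ x_nom + σ * Real.sqrt T * stdNormalQuantile r := by
  obtain ⟨M, hM⟩ := hBbd
  set d : ℝ := 2 * c * σ^2 with hd
  have hdpos : 0 < d := by positivity
  set g : ℝ → ℝ := fun z => Real.exp (-(B z) / d) with hg
  have hgpos : ∀ z, 0 < g z := fun z => Real.exp_pos _
  have hgmeas : Measurable g := (Real.measurable_exp.comp ((hBmeas.neg).div_const d))
  set C : ℝ := Real.exp (M / d) with hC
  have hgle : ∀ z ∈ Set.Icc (0:ℝ) 1, g z ≤ C := by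
    intro z hz
    apply Real.exp_le_exp.2
    have h1 : -(B z) ≤ |B z| := neg_le_abs _
    have h2 := hM z hz
    exact div_le_div_of_nonneg_right (le_trans h1 h2) hdpos.le
  have hgmono : MonotoneOn g (Set.Icc 0 1) := by
    intro z hz w hw hzw
    apply Real.exp_le_exp.2
    have := hBanti hz hw hzw
    exact div_le_div_of_nonneg_right (by linarith) hdpos.le
  -- integrability on subintervals of [0,1]
  have hgint : ∀ x y, 0 ≤ x → x ≤ y → y ≤ 1 → IntervalIntegrable g MeasureTheory.volume x y := by
    intro x y hx hxy hy
    rw [intervalIntegrable_iff_integrableOn_Ioc_of_le hxy]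
    refine MeasureTheory.Integrable.mono'
      (MeasureTheory.integrableOn_const measure_Ioc_lt_top.ne enorm_ne_top :
        MeasureTheory.IntegrableOn (fun _ => C) (Set.Ioc x y) MeasureTheory.volume)
      (hgmeas.aestronglyMeasurable.restrict) ?_
    refine (MeasureTheory.ae_restrict_iff' measurableSet_Ioc).2 (Filter.Eventually.of_forall ?_)
    intro z hz
    rw [Real.norm_eq_abs, abs_of_pos (hgpos z)]
    exact hgle z ⟨le_trans hx hz.1.le, le_trans hz.2 hy⟩
  have hHeq : ∀ r, H r = ∫ z in (0:ℝ)..r, g z := hH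
  -- H s - H r = ∫ r..s g for 0 ≤ r ≤ s ≤ 1
  have hHsub : ∀ r s, 0 ≤ r → r ≤ s → s ≤ 1 → H s - H r = ∫ z in r..s, g z := by
    intro r s hr hrs hs
    rw [hHeq r, hHeq s]
    rw [← intervalIntegral.integral_add_adjacent_intervals (hgint 0 r le_rfl hr (hrs.trans hs))
      (hgint r s (by linarith) hrs hs)]
    ring
  have hHpos_diff : ∀ r s, 0 ≤ r → r < s → s ≤ 1 → 0 < ∫ z in r..s, g z := fun r s hr hrs hs =>
    intervalIntegral.intervalIntegral_pos_of_pos (hgint r s hr hrs.le hs) hgpos hrs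
  have hH0 : H 0 = 0 := by rw [hHeq]; simp
  have hHlt : ∀ r s, 0 ≤ r → r < s → s ≤ 1 → H r < H s := by
    intro r s hr hrs hs
    have := hHsub r s hr hrs.le hs
    have := hHpos_diff r s hr hrs hs
    linarith
  have hH1pos : (0:ℝ) < H 1 := by
    have := hHlt 0 1 le_rfl one_pos le_rfl
    linarith [hH0]
  -- membership of H r / H 1 in (0,1) and Chebyshev bound
  have hfrac : ∀ r ∈ Set.Ioo (0:ℝ) 1, H r / H 1 ∈ Set.Ioo (0:ℝ) 1 ∧ H r / H 1 ≤ r := by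
    intro r hr
    obtain ⟨hr0, hr1⟩ := hr
    have hHrpos : 0 < H r := by have := hHlt 0 r le_rfl hr0 hr1.le; linarith [hH0]
    have hHr1 : H r < H 1 := hHlt r 1 hr0.le hr1 le_rfl
    constructor
    · exact ⟨div_pos hHrpos hH1pos, (div_lt_one hH1pos).2 hHr1⟩
    · -- Chebyshev: H r ≤ r * H 1
      rw [div_le_iff₀ hH1pos]
      have hub : H r ≤ r * g r := by
        have := intervalIntegral.integral_mono_on (μ := MeasureTheory.volume) hr0.le
          (hgint 0 r le_rfl hr0.le hr1.le) intervalIntegrable_const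
          (fun z hz => hgmono ⟨hz.1, hz.2.trans hr1.le⟩ ⟨hr0.le, hr1.le⟩ hz.2)
        rw [intervalIntegral.integral_const, smul_eq_mul, sub_zero] at this
        rwa [hHeq r]
      have hlb : (1 - r) * g r ≤ ∫ z in r..1, g z := by
        have := intervalIntegral.integral_mono_on (μ := MeasureTheory.volume) hr1.le
          intervalIntegrable_const (hgint r 1 hr0.le hr1.le le_rfl)
          (fun z hz => hgmono ⟨hr0.le, hr1.le⟩ ⟨hr0.le.trans hz.1, hz.2⟩ hz.1)
        rwa [intervalIntegral.integral_const, smul_eq_mul] at this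
      have hsplit : H 1 = H r + ∫ z in r..1, g z := by
        have := hHsub r 1 hr0.le hr1.le le_rfl; linarith
      have hgrpos := hgpos r
      nlinarith [hub, hlb, hsplit]
  have hqmono : StrictMonoOn qν (Set.Ioo 0 1) := by
    intro r hr s hs hrs
    rw [hqν r, hqν s]
    have h1 := (hfrac r hr).1
    have h2 := (hfrac s hs).1
    have hlt : H r / H 1 < H s / H 1 :=
      div_lt_div_of_pos_right (hHlt r s hr.1.le hrs hs.2.le) hH1pos
    have hq := Aux.quantile_strictMonoOn h1 h2 hlt
    have hst : 0 < σ * Real.sqrt T := mul_pos hσ (Real.sqrt_pos.2 hT)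
    nlinarith [mul_lt_mul_of_pos_left hq hst]
  refine ⟨hqmono, fun r hr => ?_⟩
  rw [hqν r]
  have h1 := (hfrac r hr).1
  have h2 := (hfrac r hr).2
  have hq := Aux.quantile_monoOn h1 hr h2
  have hst : 0 ≤ σ * Real.sqrt T := le_of_lt (mul_pos hσ (Real.sqrt_pos.2 hT))
  nlinarith [mul_le_mul_of_nonneg_left hq hst]
end

section
/- Monotonicity of the image under φ: for any z ∈ (−1,1]^N and M > 0, the vector b defined recursively by b₁ = M z₁ and b_i = ½(b_{i−1} − M) + ½(b_{i−1} + M) z_i satisfies −M < b_N ≤ b_{N−1} ≤ ⋯ ≤ b₁ ≤ M, with b_i < b_{i−1} whenever z_i < 1. -/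
/-- The map φ: given `z`, define `b` recursively by `b 0 = M * z 0` and
`b (i+1) = (b i - M)/2 + ((b i + M)/2) * z (i+1)`. -/
noncomputable def phiVec (M : ℝ) (z : ℕ → ℝ) : ℕ → ℝ
  | 0 => M * z 0
  | i + 1 => (phiVec M z i - M) / 2 + ((phiVec M z i + M) / 2) * z (i + 1)

/-!
Everything follows from two rewritings of the recursion in terms of the shifted value `b i + M`:
`b (i+1) + M = (b i + M) (1 + z (i+1)) / 2` and `b (i+1) - b i = (b i + M) (z (i+1) - 1) / 2`.
The first keeps `b i + M` positive, and then the second makes the sequence decrease, strictly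
where `z (i+1) < 1`; the upper bound is inherited from `b 0 = M z 0 ≤ M`.
-/

section

variable {M : ℝ} {z : ℕ → ℝ} {i : ℕ}

theorem phiVec_succ_add (M : ℝ) (z : ℕ → ℝ) (i : ℕ) :
    phiVec M z (i + 1) + M = (phiVec M z i + M) * (1 + z (i + 1)) / 2 := by
  simp only [phiVec]; ring

theorem phiVec_succ_sub (M : ℝ) (z : ℕ → ℝ) (i : ℕ) :
    phiVec M z (i + 1) - phiVec M z i = (phiVec M z i + M) * (z (i + 1) - 1) / 2 := by
  simp only [phiVec]; ring

theorem neg_lt_phiVec (hM : 0 < M) (hz : ∀ j ≤ i, -1 < z j) : -M < phiVec M z i := by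
  induction i with
  | zero =>
    have h0 : 0 < M * (1 + z 0) := mul_pos hM (by linarith [hz 0 le_rfl])
    simp only [phiVec]; linarith
  | succ i ih =>
    have hi : 0 < phiVec M z i + M := by linarith [ih fun j hj => hz j (by omega)]
    have hpos : 0 < (phiVec M z i + M) * (1 + z (i + 1)) / 2 :=
      half_pos (mul_pos hi (by linarith [hz (i + 1) le_rfl]))
    linarith [phiVec_succ_add M z i]

theorem phiVec_succ_le (hb : -M < phiVec M z i) (hz : z (i + 1) ≤ 1) :
    phiVec M z (i + 1) ≤ phiVec M z i := by
  have : (phiVec M z i + M) * (z (i + 1) - 1) / 2 ≤ 0 :=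
    div_nonpos_of_nonpos_of_nonneg (mul_nonpos_of_nonneg_of_nonpos (by linarith) (by linarith))
      zero_le_two
  linarith [phiVec_succ_sub M z i]

theorem phiVec_succ_lt (hb : -M < phiVec M z i) (hz : z (i + 1) < 1) :
    phiVec M z (i + 1) < phiVec M z i := by
  have : (phiVec M z i + M) * (z (i + 1) - 1) / 2 < 0 :=
    div_neg_of_neg_of_pos (mul_neg_of_pos_of_neg (by linarith) (by linarith)) two_pos
  linarith [phiVec_succ_sub M z i]

theorem phiVec_le (hM : 0 < M) (hz : ∀ j ≤ i, z j ∈ Set.Ioc (-1 : ℝ) 1) :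
    phiVec M z i ≤ M := by
  induction i with
  | zero =>
    simp only [phiVec]
    exact mul_le_of_le_one_right hM.le (hz 0 le_rfl).2
  | succ i ih =>
    have hz' : ∀ j ≤ i, z j ∈ Set.Ioc (-1 : ℝ) 1 := fun j hj => hz j (by omega)
    have hlower : -M < phiVec M z i := neg_lt_phiVec hM fun j hj => (hz' j hj).1
    exact (phiVec_succ_le hlower (hz (i + 1) le_rfl).2).trans (ih hz')

end

theorem phi_image_monotone_general
    (M : ℝ) (hM : 0 < M) (N : ℕ)
    (z : ℕ → ℝ) (hz : ∀ i, i < N → z i ∈ Set.Ioc (-1 : ℝ) 1) :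
    (∀ i, i < N → -M < phiVec M z i ∧ phiVec M z i ≤ M)
    ∧ (∀ i, i + 1 < N → phiVec M z (i + 1) ≤ phiVec M z i)
    ∧ (∀ i, i + 1 < N → z (i + 1) < 1 → phiVec M z (i + 1) < phiVec M z i) := by
  have hlower : ∀ i, i < N → -M < phiVec M z i := fun i hi =>
    neg_lt_phiVec hM fun j hj => (hz j (by omega)).1
  refine ⟨fun i hi => ⟨hlower i hi, phiVec_le hM fun j hj => hz j (by omega)⟩, ?_, ?_⟩
  · exact fun i hi => phiVec_succ_le (hlower i (by omega)) (hz (i + 1) hi).2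
  · exact fun i hi hz1 => phiVec_succ_lt (hlower i (by omega)) hz1

theorem phi_image_monotone
    (M : ℝ) (hM : 0 < M) (N : ℕ) (hN : 1 ≤ N)
    (z : ℕ → ℝ) (hz : ∀ i, i < N → z i ∈ Set.Ioc (-1 : ℝ) 1) :
    (∀ i, i < N → -M < phiVec M z i ∧ phiVec M z i ≤ M)
    ∧ (∀ i, i + 1 < N → phiVec M z (i + 1) ≤ phiVec M z i)
    ∧ (∀ i, i + 1 < N → z (i + 1) < 1 → phiVec M z (i + 1) < phiVec M z i) :=
  phi_image_monotone_general M hM N z hz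
end
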